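/- arXiv:1403.5592 — 3 statements merged into one kernel-verified Lean document; each statement's English description precedes it below -/
import Mathlib

section
/- Let V be an isometric operator in a finite-dimensional complex Hilbert space H, and let Δ be an open subset of 𝕋 with Δ ≠ 𝕋 such that ζ^{-1} is a point of regular type of V for every ζ ∈ Δ. Then for every ζ ∈ Δ, the image of the subspace M_ζ(V) under the orthogonal projection of H onto M_∞(V) equals M_∞(V), i.e., P_{M_∞(V)} M_ζ(V) = M_∞(V). -/
/-- The unit circle `𝕋 = {z ∈ ℂ : |z| = 1}`, as a subset of `ℂ`. -/
def unitCircle : Set ℂ := {z : ℂ | ‖z‖ = 1}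

/-- Let `V` be an isometric operator in a finite-dimensional complex Hilbert space `H`
(a linear map `V : D(V) → H` with `‖Vf‖ = ‖f‖` on a subspace `D(V) ⊆ H`), and let `Δ` be
an open subset of `𝕋` with `Δ ≠ 𝕋` such that `ζ⁻¹` is a point of regular type of `V`
for every `ζ ∈ Δ` (i.e. `‖Vf − ζ⁻¹f‖ ≥ c‖f‖` for some `c > 0`). Then for every
`ζ ∈ Δ`, the image of `M_ζ(V) = {f − ζVf : f ∈ D(V)}` under the orthogonal projection
onto `M_∞(V) = R(V)` equals `M_∞(V)`. -/
theorem projection_of_Mzeta_eq_range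
    {H : Type*} [NormedAddCommGroup H] [InnerProductSpace ℂ H] [FiniteDimensional ℂ H]
    (D : Submodule ℂ H) (V : D →ₗ[ℂ] H)
    (hiso : ∀ f : D, ‖V f‖ = ‖(f : H)‖)
    (Δ : Set ℂ) (hsub : Δ ⊆ unitCircle)
    (hopen : ∃ U : Set ℂ, IsOpen U ∧ Δ = U ∩ unitCircle)
    (hne : Δ ≠ unitCircle)
    (hreg : ∀ ζ ∈ Δ, ∃ c : ℝ, 0 < c ∧ ∀ f : D, c * ‖(f : H)‖ ≤ ‖V f - ζ⁻¹ • (f : H)‖) :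
    ∀ ζ ∈ Δ,
      Submodule.map
        (((LinearMap.range V).subtypeL.comp (Submodule.orthogonalProjectionOnto (LinearMap.range V)) : H →L[ℂ] H) : H →ₗ[ℂ] H)
        (LinearMap.range (D.subtype - ζ • V)) = LinearMap.range V := by
  intro ζ hζ
  have hζ1 : ‖ζ‖ = 1 := hsub hζ
  have hζ0 : ζ ≠ 0 := by
    intro h; rw [h] at hζ1; simp at hζ1
  obtain ⟨c, hc, hr⟩ := hreg ζ hζ
  set K := LinearMap.range V with hK
  set Q := K.subtypeL.comp (Submodule.orthogonalProjectionOnto K) with hQ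
  set T : D →ₗ[ℂ] H := (Q : H →ₗ[ℂ] H) ∘ₗ (D.subtype - ζ • V) with hT
  have hmap : Submodule.map (Q : H →ₗ[ℂ] H) (LinearMap.range (D.subtype - ζ • V)) = LinearMap.range T := by
    rw [hT, LinearMap.range_comp]
  rw [hmap]
  -- V is injective
  have hVinj : Function.Injective V := by
    intro a b h
    have h1 : ‖V (a - b)‖ = ‖((a - b : D) : H)‖ := hiso _
    rw [map_sub, h, sub_self, norm_zero] at h1
    have h2 : ((a - b : D) : H) = 0 := norm_eq_zero.mp h1.symm
    have h3 : (a - b : D) = 0 := by exact_mod_cast h2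
    exact sub_eq_zero.mp h3
  -- T is injective
  have hTinj : Function.Injective T := by
    rw [← LinearMap.ker_eq_bot, Submodule.eq_bot_iff]
    intro f hf
    rw [LinearMap.mem_ker] at hf
    have hTf : Q ((f : H) - ζ • V f) = 0 := by
      simpa [hT, LinearMap.sub_apply, LinearMap.smul_apply] using hf
    set v : H := (f : H) - ζ • V f with hv
    have hperp : v ∈ Kᗮ := by
      apply Submodule.orthogonalProjectionOnto_eq_zero_iff.mp
      have : ((Submodule.orthogonalProjectionOnto K v : H)) = 0 := hTf
      exact_mod_cast Submodule.coe_eq_zero.mp (by exact_mod_cast this)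
    -- inner product relation
    have hVfK : V f ∈ K := ⟨f, rfl⟩
    have h1 : (inner ℂ (V f) v : ℂ) = 0 := (Submodule.mem_orthogonal K v).mp hperp (V f) hVfK
    have hVff : (inner ℂ (V f) (f : H) : ℂ) = ζ * (‖(f : H)‖ : ℂ)^2 := by
      have : (inner ℂ (V f) ((f : H) - ζ • V f) : ℂ) = 0 := h1
      rw [inner_sub_right, inner_smul_right, sub_eq_zero] at this
      rw [this, inner_self_eq_norm_sq_to_K, hiso f]
      norm_num
    -- v is orthogonal to itself
    have hvv : (inner ℂ v v : ℂ) = 0 := by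
      have hζVfK : (ζ • V f) ∈ K := K.smul_mem ζ hVfK
      have h2 : (inner ℂ (ζ • V f) v : ℂ) = 0 :=
        (Submodule.mem_orthogonal K v).mp hperp (ζ • V f) hζVfK
      have h3 : (inner ℂ v v : ℂ) = inner ℂ ((f : H)) v - inner ℂ (ζ • V f) v := by
        rw [hv, inner_sub_left]
      rw [h3, h2, sub_zero, hv, inner_sub_right, inner_smul_right]
      have h4 : (inner ℂ ((f : H)) (V f) : ℂ) = (starRingEnd ℂ) ζ * (‖(f : H)‖ : ℂ)^2 := by
        rw [← inner_conj_symm, hVff]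
        simp [mul_comm]
      rw [h4, inner_self_eq_norm_sq_to_K]
      have h5 : ζ * (starRingEnd ℂ) ζ = 1 := by
        rw [Complex.mul_conj]
        norm_cast
        rw [Complex.normSq_eq_norm_sq, hζ1]
        norm_num
      ring_nf
      rw [h5, one_mul]; exact sub_self _
    have hv0 : v = 0 := inner_self_eq_zero.mp hvv
    -- then f = ζ • V f, regularity gives f = 0
    have hfe : (f : H) = ζ • V f := by rwa [hv, sub_eq_zero] at hv0
    have hreg0 : V f - ζ⁻¹ • (f : H) = 0 := by
      rw [hfe, smul_smul, inv_mul_cancel₀ hζ0, one_smul, sub_self]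
    have := hr f
    rw [hreg0, norm_zero] at this
    have hf0 : ‖(f : H)‖ = 0 := le_antisymm (nonpos_of_mul_nonpos_right (by linarith) hc |>.trans (le_refl 0)) (norm_nonneg _)
    have : (f : H) = 0 := norm_eq_zero.mp hf0
    exact_mod_cast this
  -- rank argument
  have hle : LinearMap.range T ≤ K := by
    rintro x ⟨f, rfl⟩
    exact SetLike.coe_mem (Submodule.orthogonalProjectionOnto K _)
  have h1 : Module.finrank ℂ (LinearMap.range T) = Module.finrank ℂ D :=
    LinearMap.finrank_range_of_inj hTinj
  have h2 : Module.finrank ℂ K = Module.finrank ℂ D :=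
    LinearMap.finrank_range_of_inj hVinj
  exact Submodule.eq_of_le_of_finrank_le hle (by rw [h1, h2])
end

section
/- Let V be an isometric operator in a finite-dimensional complex Hilbert space H, and let ζ ∈ 𝕋 be such that ζ^{-1} is a point of regular type of V. Then H decomposes as the direct sum H = N_∞(V) ∔ M_ζ(V); that is, N_∞(V) ∩ M_ζ(V) = {0} and N_∞(V) + M_ζ(V) = H. -/
open scoped ComplexInnerProductSpace

/-- Let `V` be an isometric operator in a finite-dimensional complex Hilbert space `H`
(a linear map `V : D(V) → H` with `‖Vf‖ = ‖f‖` on a subspace `D(V) ⊆ H`), and let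
`ζ ∈ 𝕋` be such that `ζ⁻¹` is a point of regular type of `V` (i.e. `‖Vf − ζ⁻¹f‖ ≥ c‖f‖`
for some `c > 0` and all `f ∈ D(V)`). Then `H = N_∞(V) ∔ M_ζ(V)`: the subspaces
`N_∞(V) = H ⊖ R(V)` and `M_ζ(V) = {f − ζVf : f ∈ D(V)}` have trivial intersection and
their sum is all of `H`. -/
theorem directSum_Ninfty_Mzeta
    {H : Type*} [NormedAddCommGroup H] [InnerProductSpace ℂ H] [FiniteDimensional ℂ H]
    (D : Submodule ℂ H) (V : D →ₗ[ℂ] H)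
    (hiso : ∀ f : D, ‖V f‖ = ‖(f : H)‖)
    (ζ : ℂ) (hζ : ‖ζ‖ = 1)
    (hreg : ∃ c : ℝ, 0 < c ∧ ∀ f : D, c * ‖(f : H)‖ ≤ ‖V f - ζ⁻¹ • (f : H)‖) :
    (LinearMap.range V)ᗮ ⊓ LinearMap.range (D.subtype - ζ • V) = ⊥ ∧
    (LinearMap.range V)ᗮ ⊔ LinearMap.range (D.subtype - ζ • V) = ⊤ := by
  obtain ⟨c, hc, hreg⟩ := hreg
  have hζ0 : ζ ≠ 0 := by
    intro h; rw [h] at hζ; simp at hζ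
  set W : D →ₗ[ℂ] H := D.subtype - ζ • V with hW
  have hWf : ∀ f : D, W f = (f : H) - ζ • V f := fun f => rfl
  have hWnorm : ∀ f : D, c * ‖(f : H)‖ ≤ ‖W f‖ := by
    intro f
    have h1 : W f = (-ζ) • (V f - ζ⁻¹ • (f : H)) := by
      rw [hWf, smul_sub, smul_smul, neg_mul, mul_inv_cancel₀ hζ0, neg_smul, neg_smul,
        one_smul, sub_neg_eq_add, add_comm, ← sub_eq_add_neg]
    rw [h1, norm_smul]
    have h2 : ‖-ζ‖ = 1 := by rw [norm_neg]; simpa using hζ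
    rw [h2, one_mul]
    exact hreg f
  have hinf : (LinearMap.range V)ᗮ ⊓ LinearMap.range W = ⊥ := by
    rw [Submodule.eq_bot_iff]
    rintro x ⟨hx1, f, rfl⟩
    have hperp : ⟪V f, W f⟫ = 0 := hx1 (V f) ⟨f, rfl⟩
    have hVf : ⟪V f, (f : H)⟫ = ζ * (‖(f : H)‖ : ℂ)^2 := by
      have h2 : ⟪V f, W f⟫ = ⟪V f, (f : H)⟫ - ζ * ⟪V f, V f⟫ := by
        rw [hWf, inner_sub_right, inner_smul_right]
      have h3 : ⟪V f, V f⟫ = (‖(f : H)‖ : ℂ)^2 := by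
        rw [inner_self_eq_norm_sq_to_K, hiso]; norm_cast
      rw [h2, h3] at hperp
      rw [sub_eq_zero] at hperp; exact hperp
    have hnorm : ⟪W f, W f⟫ = 0 := by
      have h4 : ⟪W f, V f⟫ = 0 := by
        rw [← inner_conj_symm, hperp, map_zero]
      have h5 : ⟪W f, W f⟫ = ⟪W f, (f : H)⟫ - ζ * ⟪W f, V f⟫ := by
        rw [hWf, inner_sub_right, inner_smul_right]
      have h6 : ⟪W f, (f : H)⟫ = ⟪(f : H), (f : H)⟫ - (starRingEnd ℂ) ζ * ⟪V f, (f : H)⟫ := by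
        rw [hWf, inner_sub_left, inner_smul_left]
      have habs : (starRingEnd ℂ) ζ * ζ = 1 := by
        rw [mul_comm, Complex.mul_conj]
        norm_cast
        rw [Complex.normSq_eq_norm_sq, hζ, one_pow]
      have h7 : ⟪(f : H), (f : H)⟫ = (‖(f : H)‖ : ℂ)^2 := by
        rw [inner_self_eq_norm_sq_to_K]; norm_cast
      rw [h5, h4, h6, h7, hVf]
      linear_combination (-(‖(f : H)‖ : ℂ)^2) * habs
    exact inner_self_eq_zero.mp hnorm
  refine ⟨hinf, ?_⟩
  have hVinj : Function.Injective V := by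
    rw [← LinearMap.ker_eq_bot, Submodule.eq_bot_iff]
    intro f hf
    have h0 : ‖V f‖ = 0 := by rw [LinearMap.mem_ker.mp hf, norm_zero]
    rw [hiso, norm_eq_zero] at h0
    exact Subtype.ext h0
  have hWinj : Function.Injective W := by
    rw [← LinearMap.ker_eq_bot, Submodule.eq_bot_iff]
    intro f hf
    have h0 : W f = 0 := LinearMap.mem_ker.mp hf
    have h1 : c * ‖(f : H)‖ ≤ 0 := by simpa [h0] using hWnorm f
    have h2 : ‖(f : H)‖ = 0 := by nlinarith [norm_nonneg (f : H)]
    exact Subtype.ext (norm_eq_zero.mp h2)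
  have hdV : Module.finrank ℂ (LinearMap.range V) = Module.finrank ℂ D :=
    LinearMap.finrank_range_of_inj hVinj
  have hdW : Module.finrank ℂ (LinearMap.range W) = Module.finrank ℂ D :=
    LinearMap.finrank_range_of_inj hWinj
  have horth : Module.finrank ℂ (LinearMap.range V) +
      Module.finrank ℂ (LinearMap.range V)ᗮ = Module.finrank ℂ H :=
    Submodule.finrank_add_finrank_orthogonal _
  have hsum := Submodule.finrank_sup_add_finrank_inf_eq
    ((LinearMap.range V)ᗮ) (LinearMap.range W)
  rw [hinf] at hsum
  have hfr : Module.finrank ℂ ↥((LinearMap.range V)ᗮ ⊔ LinearMap.range W) =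
      Module.finrank ℂ H := by
    simp only [finrank_bot, add_zero] at hsum
    omega
  exact Submodule.eq_top_of_finrank_eq hfr
end

section
/- Let S_0 = [[1,1,0],[1,1,0],[0,0,1]] and S_1 = [[1,1,0],[1,1,0],[0,0,0]] (3×3 complex matrices), and let Δ = l(1,−1) = {e^{iτ} : 0 < τ < π} be the open upper half of the unit circle. Then the truncated matrix trigonometric moment problem with moments S_0, S_1 has a solution with a gap on Δ: there exists a ℂ_{3×3}^≥-valued Borel measure M on 𝕋 such that M(Δ) = 0 and, for n = 0, 1 and every u ∈ ℂ³, ∫_𝕋 z^n dμ_u(z) = (S_n u, u)_{ℂ³}, where μ_u is the finite nonnegative Borel measure μ_u(δ) = (M(δ)u, u)_{ℂ³}. -/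
open MeasureTheory Matrix
open scoped ComplexOrder

/-- The open upper half of the unit circle: `l(1,−1) = {e^{iτ} : 0 < τ < π}`. -/
def upperArc : Set ↥unitCircle :=
  {z : ↥unitCircle | ∃ τ : ℝ, 0 < τ ∧ τ < Real.pi ∧ (z : ℂ) = Complex.exp (τ * Complex.I)}

/-- The moment `S_0` of Example 2.1. -/
def S₀ : Matrix (Fin 3) (Fin 3) ℂ := !![1, 1, 0; 1, 1, 0; 0, 0, 1]

/-- The moment `S_1` of Example 2.1. -/
def S₁ : Matrix (Fin 3) (Fin 3) ℂ := !![1, 1, 0; 1, 1, 0; 0, 0, 0]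

namespace ExampleGap
open scoped Classical

noncomputable def Amat : Matrix (Fin 3) (Fin 3) ℂ := !![1, 1, 0; 1, 1, 0; 0, 0, 1/2]
noncomputable def Bmat : Matrix (Fin 3) (Fin 3) ℂ := !![0, 0, 0; 0, 0, 0; 0, 0, 1/2]

noncomputable def p1 : ↥unitCircle := ⟨1, by simp [unitCircle]⟩
noncomputable def pm1 : ↥unitCircle := ⟨-1, by simp [unitCircle]⟩

lemma qA (u : Fin 3 → ℂ) :
    dotProduct (star u) (Amat *ᵥ u)
      = star (u 0 + u 1) * (u 0 + u 1) + (1/2 : ℂ) * (star (u 2) * u 2) := by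
  simp [Amat, dotProduct, Matrix.mulVec, Fin.sum_univ_three]
  ring

lemma qB (u : Fin 3 → ℂ) :
    dotProduct (star u) (Bmat *ᵥ u) = (1/2 : ℂ) * (star (u 2) * u 2) := by
  simp [Bmat, dotProduct, Matrix.mulVec, Fin.sum_univ_three]
  ring

lemma half_nonneg : (0 : ℂ) ≤ (1/2 : ℂ) := by
  rw [Complex.le_def]; norm_num

lemma qA_nonneg (u : Fin 3 → ℂ) : (0:ℂ) ≤ dotProduct (star u) (Amat *ᵥ u) := by
  rw [qA]
  exact add_nonneg (star_mul_self_nonneg _) (mul_nonneg half_nonneg (star_mul_self_nonneg _))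

lemma qB_nonneg (u : Fin 3 → ℂ) : (0:ℂ) ≤ dotProduct (star u) (Bmat *ᵥ u) := by
  rw [qB]
  exact mul_nonneg half_nonneg (star_mul_self_nonneg _)

lemma Amat_psd : Amat.PosSemidef := by
  refine Matrix.PosSemidef.of_dotProduct_mulVec_nonneg ?_ ?_
  · ext i j
    rw [Matrix.conjTranspose_apply]
    fin_cases i <;> fin_cases j <;> norm_num [Amat, Complex.ext_iff]
  · intro u; exact qA_nonneg u

lemma Bmat_psd : Bmat.PosSemidef := by
  refine Matrix.PosSemidef.of_dotProduct_mulVec_nonneg ?_ ?_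
  · ext i j
    rw [Matrix.conjTranspose_apply]
    fin_cases i <;> fin_cases j <;> norm_num [Bmat, Complex.ext_iff]
  · intro u; exact qB_nonneg u

lemma S0_eq : S₀ = Amat + Bmat := by
  ext i j; fin_cases i <;> fin_cases j <;> norm_num [S₀, Amat, Bmat]

lemma S1_eq : S₁ = Amat - Bmat := by
  ext i j; fin_cases i <;> fin_cases j <;> norm_num [S₁, Amat, Bmat]

/-- Matrix-valued dirac vector measure. -/
noncomputable def diracVM (a : ↥unitCircle) (C : Matrix (Fin 3) (Fin 3) ℂ) :
    VectorMeasure ↥unitCircle (Matrix (Fin 3) (Fin 3) ℂ) :=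
  ((MeasureTheory.Measure.dirac a).toSignedMeasure).mapRange
    { toFun := fun r => (r : ℂ) • C
      map_zero' := by simp
      map_add' := by intro x y; push_cast; rw [add_smul] }
    (by
      exact (Complex.continuous_ofReal.smul continuous_const : Continuous fun r : ℝ => (r:ℂ) • C))

lemma diracVM_apply (a : ↥unitCircle) (C : Matrix (Fin 3) (Fin 3) ℂ)
    {δ : Set ↥unitCircle} (hδ : MeasurableSet δ) :
    diracVM a C δ = if a ∈ δ then C else 0 := by
  rw [diracVM, VectorMeasure.mapRange_apply, Measure.toSignedMeasure_apply_measurable hδ,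
    measureReal_def, Measure.dirac_apply' a hδ]
  by_cases h : a ∈ δ <;> simp [h]

lemma p1_not_mem : p1 ∉ upperArc := by
  rintro ⟨τ, hτ0, hτπ, h⟩
  have : ‖Complex.exp (τ * Complex.I) - 1‖ > 0 := by
    rw [show (τ : ℂ) * Complex.I = (τ : ℝ) * Complex.I by push_cast; ring]
    have : Complex.exp (τ * Complex.I) ≠ 1 := by
      intro he
      rw [Complex.exp_eq_one_iff] at he
      obtain ⟨n, hn⟩ := he
      have hI : (Complex.I : ℂ) ≠ 0 := Complex.I_ne_zero
      have : (τ : ℂ) = n * (2 * Real.pi) := by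
        have h3 : (τ : ℂ) * Complex.I = (n * (2 * Real.pi)) * Complex.I := by
          rw [hn]; push_cast; ring
        exact mul_right_cancel₀ hI h3
      have hτ : τ = n * (2 * Real.pi) := by exact_mod_cast this
      have hπ := Real.pi_pos
      rcases lt_trichotomy (n : ℝ) 0 with h' | h' | h'
      · nlinarith
      · rw [hτ, h'] at hτ0; simp at hτ0
      · have : (1:ℝ) ≤ n := by exact_mod_cast (by exact_mod_cast h' : 0 < n)
        nlinarith
    simpa [sub_eq_zero] using this
  have hp : (p1 : ℂ) = 1 := rfl
  rw [hp] at h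
  rw [← h] at this
  simp at this

lemma pm1_not_mem : pm1 ∉ upperArc := by
  rintro ⟨τ, hτ0, hτπ, h⟩
  have hp : (pm1 : ℂ) = -1 := rfl
  rw [hp] at h
  have h2 : Complex.exp (2 * (τ * Complex.I)) = 1 := by
    rw [show (2 : ℂ) * (τ * Complex.I) = τ * Complex.I + τ * Complex.I by ring,
      Complex.exp_add, ← h]
    ring
  rw [Complex.exp_eq_one_iff] at h2
  obtain ⟨n, hn⟩ := h2
  have hI : (Complex.I : ℂ) ≠ 0 := Complex.I_ne_zero
  have : (2 * τ : ℂ) = n * (2 * Real.pi) := by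
    have h3 : (2 * τ : ℂ) * Complex.I = (n * (2 * Real.pi)) * Complex.I := by
      rw [show ((2:ℂ) * τ) * Complex.I = 2 * (↑τ * Complex.I) by ring, hn]; push_cast; ring
    exact mul_right_cancel₀ hI h3
  have hτ : 2 * τ = n * (2 * Real.pi) := by exact_mod_cast this
  have hπ := Real.pi_pos
  rcases lt_trichotomy (n : ℝ) 0 with h' | h' | h'
  · nlinarith
  · rw [h'] at hτ; nlinarith
  · have : (1:ℝ) ≤ n := by exact_mod_cast (by exact_mod_cast h' : 0 < n)
    nlinarith

end ExampleGap

open ExampleGap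

/-- The truncated matrix trigonometric moment problem with moments `S₀, S₁` has a solution
with a gap on `Δ = l(1,−1)`: there is a `ℂ_{3×3}^≥`-valued Borel measure `M` on `𝕋` with
`M(Δ) = 0` such that for `n = 0, 1` and every `u ∈ ℂ³`, `∫_𝕋 zⁿ dμ_u = (S_n u, u)`,
where `μ_u(δ) = (M(δ)u, u)` is the induced finite nonnegative Borel measure. -/
theorem example_moment_problem_with_gap_solvable :
    ∃ M : VectorMeasure ↥unitCircle (Matrix (Fin 3) (Fin 3) ℂ),
      (∀ δ : Set ↥unitCircle, (M δ).PosSemidef) ∧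
      M upperArc = 0 ∧
      ∀ u : Fin 3 → ℂ, ∃ μ : Measure ↥unitCircle, IsFiniteMeasure μ ∧
        (∀ δ : Set ↥unitCircle, MeasurableSet δ →
          μ δ = ENNReal.ofReal ((dotProduct (star u) (M δ *ᵥ u)).re)) ∧
        (∫ z : ↥unitCircle, (1 : ℂ) ∂μ = dotProduct (star u) (S₀ *ᵥ u)) ∧
        (∫ z : ↥unitCircle, (z : ℂ) ∂μ = dotProduct (star u) (S₁ *ᵥ u)) := by
  classical
  refine ⟨diracVM p1 Amat + diracVM pm1 Bmat, ?_, ?_, ?_⟩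
  · intro δ
    by_cases hδ : MeasurableSet δ
    · rw [VectorMeasure.add_apply, diracVM_apply _ _ hδ, diracVM_apply _ _ hδ]
      have hA : (if p1 ∈ δ then Amat else 0).PosSemidef := by
        split_ifs; exacts [Amat_psd, Matrix.PosSemidef.zero]
      have hB : (if pm1 ∈ δ then Bmat else 0).PosSemidef := by
        split_ifs; exacts [Bmat_psd, Matrix.PosSemidef.zero]
      exact hA.add hB
    · rw [VectorMeasure.not_measurable _ hδ]
      exact Matrix.PosSemidef.zero
  · by_cases hδ : MeasurableSet upperArc
    · rw [VectorMeasure.add_apply, diracVM_apply _ _ hδ, diracVM_apply _ _ hδ,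
        if_neg p1_not_mem, if_neg pm1_not_mem, add_zero]
    · exact VectorMeasure.not_measurable _ hδ
  · intro u
    set rA : ℝ := (dotProduct (star u) (Amat *ᵥ u)).re with hrA
    set rB : ℝ := (dotProduct (star u) (Bmat *ᵥ u)).re with hrB
    have hrA0 : 0 ≤ rA := by
      have := qA_nonneg u; rw [Complex.le_def] at this; simpa [hrA] using this.1
    have hrB0 : 0 ≤ rB := by
      have := qB_nonneg u; rw [Complex.le_def] at this; simpa [hrB] using this.1
    have hqA : dotProduct (star u) (Amat *ᵥ u) = (rA : ℂ) := by
      have h := qA_nonneg u; rw [Complex.le_def] at h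
      refine Complex.ext ?_ ?_
      · rw [Complex.ofReal_re]
      · rw [Complex.ofReal_im, ← h.2, Complex.zero_im]
    have hqB : dotProduct (star u) (Bmat *ᵥ u) = (rB : ℂ) := by
      have h := qB_nonneg u; rw [Complex.le_def] at h
      refine Complex.ext ?_ ?_
      · rw [Complex.ofReal_re]
      · rw [Complex.ofReal_im, ← h.2, Complex.zero_im]
    refine ⟨ENNReal.ofReal rA • MeasureTheory.Measure.dirac p1
        + ENNReal.ofReal rB • MeasureTheory.Measure.dirac pm1, ?_, ?_, ?_, ?_⟩
    · refine ⟨?_⟩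
      rw [Measure.add_apply, Measure.smul_apply, Measure.smul_apply,
        Measure.dirac_apply_of_mem (Set.mem_univ _), Measure.dirac_apply_of_mem (Set.mem_univ _)]
      simp [ENNReal.add_lt_top, ENNReal.ofReal_lt_top]
    · intro δ hδ
      rw [VectorMeasure.add_apply (diracVM p1 Amat) (diracVM pm1 Bmat), diracVM_apply _ _ hδ, diracVM_apply _ _ hδ]
      simp only [Measure.add_apply, Measure.smul_apply, smul_eq_mul,
        Measure.dirac_apply' _ hδ]
      by_cases h : p1 ∈ δ <;> by_cases h' : pm1 ∈ δ <;>
        simp [h, h', Matrix.add_mulVec, dotProduct_add, Matrix.zero_mulVec,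
          dotProduct_zero, hqA, hqB, ENNReal.ofReal_add hrA0 hrB0]
    · rw [MeasureTheory.integral_const, measureReal_def]
      simp only [Measure.add_apply, Measure.smul_apply, smul_eq_mul, Set.mem_univ,
        MeasureTheory.Measure.dirac_apply_of_mem, mul_one]
      rw [ENNReal.toReal_add (by simp) (by simp), ENNReal.toReal_ofReal hrA0,
        ENNReal.toReal_ofReal hrB0, S0_eq, Matrix.add_mulVec, dotProduct_add,
        hqA, hqB]
      push_cast
      simp
    · have hi1 : MeasureTheory.Integrable (fun z : ↥unitCircle => (z : ℂ))
          (ENNReal.ofReal rA • MeasureTheory.Measure.dirac p1) := by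
        refine MeasureTheory.Integrable.smul_measure ?_ ENNReal.ofReal_ne_top
        refine ⟨continuous_subtype_val.aestronglyMeasurable, ?_⟩
        unfold MeasureTheory.HasFiniteIntegral
        rw [MeasureTheory.lintegral_dirac]
        exact ENNReal.coe_lt_top
      have hi2 : MeasureTheory.Integrable (fun z : ↥unitCircle => (z : ℂ))
          (ENNReal.ofReal rB • MeasureTheory.Measure.dirac pm1) := by
        refine MeasureTheory.Integrable.smul_measure ?_ ENNReal.ofReal_ne_top
        refine ⟨continuous_subtype_val.aestronglyMeasurable, ?_⟩
        unfold MeasureTheory.HasFiniteIntegral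
        rw [MeasureTheory.lintegral_dirac]
        exact ENNReal.coe_lt_top
      rw [MeasureTheory.integral_add_measure hi1 hi2,
        MeasureTheory.integral_smul_measure, MeasureTheory.integral_smul_measure,
        MeasureTheory.integral_dirac, MeasureTheory.integral_dirac,
        ENNReal.toReal_ofReal hrA0, ENNReal.toReal_ofReal hrB0]
      have hp1 : (p1 : ℂ) = 1 := rfl
      have hpm1 : (pm1 : ℂ) = -1 := rfl
      rw [hp1, hpm1, S1_eq, Matrix.sub_mulVec, dotProduct_sub, hqA, hqB]
      push_cast
      ring_nf
      simp [Complex.real_smul]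
      ring
end
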